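/- For any density matrix ρ₁₂ on the tensor product H₁ ⊗ H₂ of two finite-dimensional Hilbert spaces, with partial traces ρ₁ = Tr₂ ρ₁₂ and ρ₂ = Tr₁ ρ₁₂, the mutual information satisfies S(ρ₁) + S(ρ₂) − S(ρ₁₂) ≥ −2 ln(1 − (1/2) Tr[(√ρ₁₂ − √(ρ₁ ⊗ ρ₂))²]). -/

import Mathlib

open Matrix Kronecker
open scoped ComplexOrder

noncomputable def mexp {n : Type*} [Fintype n] [DecidableEq n] (A : Matrix n n ℂ) : Matrix n n ℂ :=
  if h : A.IsHermitian then h.cfc Real.exp else 0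

noncomputable def mlog {n : Type*} [Fintype n] [DecidableEq n] (A : Matrix n n ℂ) : Matrix n n ℂ :=
  if h : A.IsHermitian then h.cfc Real.log else 0

open scoped Classical in
noncomputable def msqrt {n : Type*} [Fintype n] [DecidableEq n] (A : Matrix n n ℂ) : Matrix n n ℂ :=
  if h : A.PosSemidef then (h.1.eigenvectorUnitary : Matrix n n ℂ) *
    diagonal ((↑) ∘ Real.sqrt ∘ h.1.eigenvalues) * (star h.1.eigenvectorUnitary : Matrix n n ℂ) else 0

noncomputable def entropy {n : Type*} [Fintype n] [DecidableEq n] (ρ : Matrix n n ℂ) : ℝ :=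
  -((ρ * mlog ρ).trace.re)

noncomputable def relEnt {n : Type*} [Fintype n] [DecidableEq n] (ρ σ : Matrix n n ℂ) : ℝ :=
  ((ρ * (mlog ρ - mlog σ)).trace.re)

noncomputable def ptrace₂ {n m : Type*} [Fintype n] [Fintype m]
    (ρ : Matrix (n × m) (n × m) ℂ) : Matrix n n ℂ :=
  Matrix.of fun i j => ∑ k, ρ (i, k) (j, k)

noncomputable def ptrace₁ {n m : Type*} [Fintype n] [Fintype m]
    (ρ : Matrix (n × m) (n × m) ℂ) : Matrix m m ℂ :=
  Matrix.of fun i j => ∑ k, ρ (k, i) (k, j)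

noncomputable def traceNorm {n : Type*} [Fintype n] [DecidableEq n] (A : Matrix n n ℂ) : ℝ :=
  ((((Matrix.posSemidef_conjTranspose_mul_self A).1.eigenvectorUnitary : Matrix n n ℂ) *
    diagonal (((↑) : ℝ → ℂ) ∘ Real.sqrt ∘ (Matrix.posSemidef_conjTranspose_mul_self A).1.eigenvalues) *
    (star (Matrix.posSemidef_conjTranspose_mul_self A).1.eigenvectorUnitary : Matrix n n ℂ)).trace).re

/-
Diagonalise `ρ₁₂ = ∑ₖ rₖ |uₖ⟩⟨uₖ|`, `ρ₁ = ∑ᵢ pᵢ |eᵢ⟩⟨eᵢ|`, `ρ₂ = ∑ⱼ qⱼ |fⱼ⟩⟨fⱼ|` and put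
`c k (i, j) = |⟨uₖ, eᵢ ⊗ fⱼ⟩|²`. The weights `rₖ c k (i, j)` form a probability distribution whose
marginals on `i` and on `j` are `p` and `q`: this is the defining property
`Tr (ρ₁ A) = Tr (ρ₁₂ (A ⊗ 1))` of the partial trace. The mutual information is the average of
`log (rₖ / (pᵢ qⱼ))` under this distribution, while
`1 - ½ Tr[(√ρ₁₂ - √(ρ₁ ⊗ ρ₂))²] = Tr (√ρ₁₂ √(ρ₁ ⊗ ρ₂)) = ∑ rₖ c k (i, j) √(pᵢ qⱼ / rₖ)`,
so the bound is Jensen's inequality for the concave logarithm. Since `Real.log 0 = 0`, Jensen is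
applied on the support of the distribution only, where `r`, `p` and `q` are all positive.
-/

open Finset

theorem Real.sum_mul_log_le_log_sum_mul {ι : Type*} [Fintype ι] {w x : ι → ℝ}
    (hw : ∀ i, 0 ≤ w i) (hw1 : ∑ i, w i = 1) (hx : ∀ i, w i ≠ 0 → 0 < x i) :
    ∑ i, w i * Real.log (x i) ≤ Real.log (∑ i, w i * x i) := by
  classical
  have hsupp (f : ι → ℝ) : ∑ i with w i ≠ 0, w i * f i = ∑ i, w i * f i :=
    sum_filter_of_ne fun i _ h => left_ne_zero_of_mul h
  have hw1' : ∑ i with w i ≠ 0, w i = 1 := by rwa [sum_filter_ne_zero]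
  simpa only [smul_eq_mul, hsupp] using strictConcaveOn_log_Ioi.concaveOn.le_map_sum
    (fun i _ => hw i) hw1' fun i hi => Set.mem_Ioi.2 (hx i (mem_filter.1 hi).2)

section Coupling

variable {κ σ α β : Type*} [Fintype κ] [Fintype σ] [Fintype α] [Fintype β] {r : κ → ℝ}

lemma pos_of_forall_sum_mul_comp_eq {c : κ → σ → ℝ} {p : α → ℝ} {π : σ → α}
    (hr : ∀ k, 0 ≤ r k) (hc : ∀ k s, 0 ≤ c k s)
    (hp : ∀ f : α → ℝ, ∑ k, ∑ s, r k * f (π s) * c k s = ∑ i, p i * f i)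
    {k : κ} {s : σ} (h : 0 < r k * c k s) : 0 < p (π s) := by
  classical
  have hind := hp fun i => if i = π s then 1 else 0
  simp only [mul_ite, mul_one, mul_zero, sum_ite_eq', mem_univ, if_true] at hind
  rw [← hind]
  have hnn : ∀ k' s', 0 ≤ (if π s' = π s then r k' else 0) * c k' s' := fun k' s' => by
    split_ifs <;> simp [mul_nonneg, hr, hc]
  calc 0 < r k * c k s := h
    _ = (if π s = π s then r k else 0) * c k s := by simp
    _ ≤ ∑ s', (if π s' = π s then r k else 0) * c k s' :=
        single_le_sum (fun s' _ => hnn k s') (mem_univ s)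
    _ ≤ _ := single_le_sum (f := fun k' => ∑ s', (if π s' = π s then r k' else 0) * c k' s')
        (fun k' _ => sum_nonneg fun s' _ => hnn k' s') (mem_univ k)

theorem neg_two_mul_log_sum_sqrt_le {p : α → ℝ} {q : β → ℝ} {c : κ → α × β → ℝ}
    (hr : ∀ k, 0 ≤ r k) (hr1 : ∑ k, r k = 1) (hc : ∀ k s, 0 ≤ c k s) (hc1 : ∀ k, ∑ s, c k s = 1)
    (hp : ∀ f : α → ℝ, ∑ k, ∑ s, r k * f s.1 * c k s = ∑ i, p i * f i)
    (hq : ∀ g : β → ℝ, ∑ k, ∑ s, r k * g s.2 * c k s = ∑ j, q j * g j) :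
    -2 * Real.log (∑ k, ∑ s, √(r k) * √(p s.1 * q s.2) * c k s) ≤
      ∑ k, r k * Real.log (r k) - ∑ i, p i * Real.log (p i) - ∑ j, q j * Real.log (q j) := by
  set w : κ × (α × β) → ℝ := fun t => r t.1 * c t.1 t.2
  set x : κ × (α × β) → ℝ := fun t => √(p t.2.1 * q t.2.2) / √(r t.1)
  have hw (t) : 0 ≤ w t := mul_nonneg (hr _) (hc _ _)
  have hpos (t) (ht : w t ≠ 0) : 0 < r t.1 ∧ 0 < p t.2.1 ∧ 0 < q t.2.2 := by
    have ht' : 0 < w t := (hw t).lt_of_ne' ht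
    exact ⟨pos_of_mul_pos_left ht' (hc _ _), pos_of_forall_sum_mul_comp_eq hr hc hp ht',
      pos_of_forall_sum_mul_comp_eq hr hc hq ht'⟩
  have hw1 : ∑ t, w t = 1 := by
    rw [Fintype.sum_prod_type' fun k s => r k * c k s]
    simp only [← mul_sum, hc1, mul_one, hr1]
  have hwx : ∑ t, w t * x t = ∑ k, ∑ s, √(r k) * √(p s.1 * q s.2) * c k s := by
    rw [← Fintype.sum_prod_type']
    refine sum_congr rfl fun t _ => ?_
    calc w t * x t = r t.1 / √(r t.1) * √(p t.2.1 * q t.2.2) * c t.1 t.2 := by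
          simp only [w, x]; ring
      _ = _ := by rw [Real.div_sqrt]
  have hwlogx : ∑ t, w t * Real.log (x t) =
      (∑ i, p i * Real.log (p i) + ∑ j, q j * Real.log (q j) - ∑ k, r k * Real.log (r k)) / 2 := by
    have hr' : ∑ k, ∑ s, r k * Real.log (r k) * c k s = ∑ k, r k * Real.log (r k) := by
      simp only [mul_assoc, ← mul_sum, hc1, mul_one]
    rw [← hp, ← hq, ← hr', ← Fintype.sum_prod_type', ← Fintype.sum_prod_type',
      ← Fintype.sum_prod_type', ← sum_add_distrib, ← sum_sub_distrib, sum_div]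
    refine sum_congr rfl fun t _ => ?_
    have hlog : w t * Real.log (x t) =
        w t * ((Real.log (p t.2.1) + Real.log (q t.2.2) - Real.log (r t.1)) / 2) := by
      by_cases ht : w t = 0
      · rw [ht, zero_mul, zero_mul]
      obtain ⟨hr₀, hp₀, hq₀⟩ := hpos t ht
      rw [Real.log_div (Real.sqrt_pos.2 (mul_pos hp₀ hq₀)).ne' (Real.sqrt_pos.2 hr₀).ne',
        Real.log_sqrt (mul_pos hp₀ hq₀).le, Real.log_sqrt hr₀.le, Real.log_mul hp₀.ne' hq₀.ne']
      ring
    rw [hlog]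
    ring
  have := Real.sum_mul_log_le_log_sum_mul hw hw1 fun t ht => div_pos
    (Real.sqrt_pos.2 (mul_pos (hpos t ht).2.1 (hpos t ht).2.2)) (Real.sqrt_pos.2 (hpos t ht).1)
  rw [hwx, hwlogx] at this
  linarith

end Coupling

section Spectral

variable {N : Type*} [Fintype N] [DecidableEq N] {U V : Matrix N N ℂ}

lemma trace_conj_diagonal (hU : U ∈ unitary (Matrix N N ℂ)) (a : N → ℂ) :
    (U * diagonal a * star U).trace = ∑ k, a k := by
  rw [Matrix.mul_assoc, trace_mul_comm, Matrix.mul_assoc, Unitary.star_mul_self_of_mem hU,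
    Matrix.mul_one, trace_diagonal]

lemma conj_diagonal_mul_conj_diagonal (hU : U ∈ unitary (Matrix N N ℂ)) (a b : N → ℂ) :
    U * diagonal a * star U * (U * diagonal b * star U) =
      U * diagonal (fun k => a k * b k) * star U := by
  simp only [Matrix.mul_assoc]
  rw [← Matrix.mul_assoc (star U), Unitary.star_mul_self_of_mem hU, Matrix.one_mul,
    ← Matrix.mul_assoc (diagonal a), diagonal_mul_diagonal]

lemma conj_diagonal_one (hU : U ∈ unitary (Matrix N N ℂ)) :
    U * diagonal (fun _ => ((1 : ℝ) : ℂ)) * star U = 1 := by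
  rw [Complex.ofReal_one, diagonal_one, Matrix.mul_one, Unitary.mul_star_self_of_mem hU]

lemma trace_conj_diagonal_mul_conj_diagonal (a b : N → ℝ) :
    (U * diagonal (fun k => (a k : ℂ)) * star U *
        (V * diagonal (fun s => (b s : ℂ)) * star V)).trace =
      ↑(∑ k, ∑ s, a k * b s * Complex.normSq ((star U * V) k s)) := by
  set W := star U * V
  have hcyc : U * diagonal (fun k => (a k : ℂ)) * star U *
        (V * diagonal (fun s => (b s : ℂ)) * star V) =
      U * (diagonal (fun k => (a k : ℂ)) * W * diagonal (fun s => (b s : ℂ)) * star V) := by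
    simp only [W, Matrix.mul_assoc]
  have hW : diagonal (fun k => (a k : ℂ)) * W * diagonal (fun s => (b s : ℂ)) * star V * U =
      diagonal (fun k => (a k : ℂ)) * W * diagonal (fun s => (b s : ℂ)) * star W := by
    simp only [W, star_mul, star_star, Matrix.mul_assoc]
  have hX (k s : N) : (diagonal (fun k => (a k : ℂ)) * W * diagonal (fun s => (b s : ℂ))) k s =
      a k * W k s * b s := by
    rw [mul_diagonal, diagonal_mul]
  rw [hcyc, trace_mul_comm, hW, trace]
  push_cast
  refine sum_congr rfl fun k _ => ?_
  rw [diag_apply, mul_apply]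
  refine sum_congr rfl fun s _ => ?_
  rw [hX, star_apply, Complex.star_def, ← Complex.mul_conj]
  ring

lemma sum_normSq_star_mul_apply (hU : U ∈ unitary (Matrix N N ℂ)) (hV : V ∈ unitary (Matrix N N ℂ))
    (k : N) : ∑ s, Complex.normSq ((star U * V) k s) = 1 := by
  have hW := Unitary.mul_star_self_of_mem (mul_mem (Unitary.star_mem hU) hV)
  have := congr_fun (congr_fun hW k) k
  simp only [mul_apply, star_apply, one_apply_eq, Complex.star_def, Complex.mul_conj] at this
  exact_mod_cast this

end Spectral

section Hermitian

variable {N : Type*} [Fintype N] [DecidableEq N] {A : Matrix N N ℂ}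

lemma trace_sub_sq (X Y : Matrix N N ℂ) :
    ((X - Y) ^ 2).trace = (X ^ 2).trace + (Y ^ 2).trace - 2 * (X * Y).trace := by
  rw [sq, sq, sq, sub_mul, mul_sub, mul_sub, trace_sub, trace_sub, trace_sub, trace_mul_comm Y X]
  ring

lemma Matrix.IsHermitian.eq_conj_diagonal_eigenvalues (hA : A.IsHermitian) :
    A = hA.eigenvectorUnitary * diagonal (fun k => (hA.eigenvalues k : ℂ)) *
      star (hA.eigenvectorUnitary : Matrix N N ℂ) :=
  hA.spectral_theorem

lemma Matrix.IsHermitian.sum_eigenvalues_eq_one (hA : A.IsHermitian) (htr : A.trace = 1) :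
    ∑ k, hA.eigenvalues k = 1 := by
  rw [← Complex.ofReal_inj]
  push_cast
  exact hA.trace_eq_sum_eigenvalues.symm.trans htr

lemma mlog_eq (hA : A.IsHermitian) :
    mlog A = hA.eigenvectorUnitary * diagonal (fun k => (Real.log (hA.eigenvalues k) : ℂ)) *
      star (hA.eigenvectorUnitary : Matrix N N ℂ) := by
  rw [mlog, dif_pos hA]
  rfl

lemma entropy_eq_neg_sum (hA : A.IsHermitian) :
    entropy A = -∑ k, hA.eigenvalues k * Real.log (hA.eigenvalues k) := by
  have hU := hA.eigenvectorUnitary.2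
  rw [entropy, mlog_eq hA]
  nth_rw 1 [hA.eq_conj_diagonal_eigenvalues]
  rw [conj_diagonal_mul_conj_diagonal hU, trace_conj_diagonal hU]
  norm_cast

open scoped MatrixOrder in
lemma msqrt_eq_sqrt (hA : A.PosSemidef) : msqrt A = CFC.sqrt A := by
  rw [msqrt, dif_pos hA, CFC.sqrt_eq_real_sqrt A hA.nonneg, cfcₙ_eq_cfc, hA.1.cfc_eq]
  rfl

open scoped MatrixOrder in
lemma msqrt_eq_of_sq_eq {B : Matrix N N ℂ} (hB : B.PosSemidef) (h : B ^ 2 = A) : msqrt A = B := by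
  rw [msqrt_eq_sqrt (h ▸ hB.pow 2), ← h, CFC.sqrt_sq B hB.nonneg]

open scoped MatrixOrder in
lemma msqrt_sq (hA : A.PosSemidef) : msqrt A ^ 2 = A := by
  rw [msqrt_eq_sqrt hA, CFC.sq_sqrt A hA.nonneg]

lemma posSemidef_conj_diagonal (U : Matrix N N ℂ) {a : N → ℝ} (ha : ∀ k, 0 ≤ a k) :
    (U * diagonal (fun k => (a k : ℂ)) * star U).PosSemidef :=
  (posSemidef_diagonal_iff.2 fun k => Complex.zero_le_real.2 (ha k)).mul_mul_conjTranspose_same U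

lemma msqrt_conj_diagonal {U : Matrix N N ℂ} (hU : U ∈ unitary (Matrix N N ℂ)) {a : N → ℝ}
    (ha : ∀ k, 0 ≤ a k) :
    msqrt (U * diagonal (fun k => (a k : ℂ)) * star U) =
      U * diagonal (fun k => (√(a k) : ℂ)) * star U := by
  refine msqrt_eq_of_sq_eq (posSemidef_conj_diagonal U fun k => Real.sqrt_nonneg _) ?_
  rw [sq, conj_diagonal_mul_conj_diagonal hU]
  simp only [← Complex.ofReal_mul, Real.mul_self_sqrt (ha _)]

lemma one_sub_half_trace_sq_sub_msqrt {B : Matrix N N ℂ} (hA : A.PosSemidef) (hB : B.PosSemidef)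
    (htrA : A.trace = 1) (htrB : B.trace = 1) :
    1 - (1/2) * ((msqrt A - msqrt B) ^ 2).trace.re = (msqrt A * msqrt B).trace.re := by
  rw [trace_sub_sq, msqrt_sq hA, msqrt_sq hB, htrA, htrB]
  simp only [Complex.sub_re, Complex.add_re, Complex.one_re, Complex.mul_re, Complex.re_ofNat,
    Complex.im_ofNat, zero_mul, sub_zero]
  ring

end Hermitian

section PartialTrace

variable {n m : Type*} [Fintype n] [Fintype m]

lemma ptrace₂_eq_sum_submatrix (ρ : Matrix (n × m) (n × m) ℂ) :
    ptrace₂ ρ = ∑ k, ρ.submatrix (·, k) (·, k) := by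
  ext i j
  simp [ptrace₂, Matrix.sum_apply]

lemma ptrace₁_eq_sum_submatrix (ρ : Matrix (n × m) (n × m) ℂ) :
    ptrace₁ ρ = ∑ k, ρ.submatrix (k, ·) (k, ·) := by
  ext i j
  simp [ptrace₁, Matrix.sum_apply]

lemma Matrix.PosSemidef.ptrace₂ {ρ : Matrix (n × m) (n × m) ℂ} (hρ : ρ.PosSemidef) :
    (ptrace₂ ρ).PosSemidef := by
  rw [ptrace₂_eq_sum_submatrix]
  exact posSemidef_sum _ fun k _ => hρ.submatrix _

lemma Matrix.PosSemidef.ptrace₁ {ρ : Matrix (n × m) (n × m) ℂ} (hρ : ρ.PosSemidef) :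
    (ptrace₁ ρ).PosSemidef := by
  rw [ptrace₁_eq_sum_submatrix]
  exact posSemidef_sum _ fun k _ => hρ.submatrix _

lemma trace_ptrace₂_mul [DecidableEq m] (ρ : Matrix (n × m) (n × m) ℂ) (A : Matrix n n ℂ) :
    (ptrace₂ ρ * A).trace = (ρ * (A ⊗ₖ 1)).trace := by
  simp only [trace, Matrix.diag, mul_apply, kroneckerMap_apply, ptrace₂, of_apply,
    Fintype.sum_prod_type, one_apply, mul_ite, mul_one, mul_zero, sum_ite_eq', mem_univ, if_true,
    sum_mul]
  exact sum_congr rfl fun i _ => sum_comm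

lemma trace_ptrace₁_mul [DecidableEq n] (ρ : Matrix (n × m) (n × m) ℂ) (B : Matrix m m ℂ) :
    (ptrace₁ ρ * B).trace = (ρ * (1 ⊗ₖ B)).trace := by
  simp only [trace, Matrix.diag, mul_apply, kroneckerMap_apply, ptrace₁, of_apply,
    Fintype.sum_prod_type, one_apply, ite_mul, one_mul, zero_mul, mul_ite, mul_zero, sum_ite_irrel,
    sum_const_zero, sum_ite_eq', mem_univ, if_true, sum_mul]
  exact (sum_congr rfl fun i _ => sum_comm).trans sum_comm

end PartialTrace

section Bipartite

variable {n m : Type*} [Fintype n] [DecidableEq n] [Fintype m] [DecidableEq m]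

lemma conj_diagonal_kronecker_conj_diagonal (U₁ : Matrix n n ℂ) (U₂ : Matrix m m ℂ)
    (a : n → ℂ) (b : m → ℂ) :
    (U₁ * diagonal a * star U₁) ⊗ₖ (U₂ * diagonal b * star U₂) =
      (U₁ ⊗ₖ U₂) * diagonal (fun s => a s.1 * b s.2) * star (U₁ ⊗ₖ U₂) := by
  rw [mul_kronecker_mul, mul_kronecker_mul, diagonal_kronecker_diagonal, star_eq_conjTranspose,
    star_eq_conjTranspose, star_eq_conjTranspose, conjTranspose_kronecker]

variable {ρ : Matrix (n × m) (n × m) ℂ} {U : Matrix (n × m) (n × m) ℂ} {U₁ : Matrix n n ℂ}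
  {U₂ : Matrix m m ℂ} {r : n × m → ℝ}

lemma sum_mul_comp_fst_mul_normSq_eq (hρ : ρ = U * diagonal (fun k => (r k : ℂ)) * star U)
    (hU₁ : U₁ ∈ unitary (Matrix n n ℂ)) (hU₂ : U₂ ∈ unitary (Matrix m m ℂ)) {p : n → ℝ}
    (hρ₁ : ptrace₂ ρ = U₁ * diagonal (fun i => (p i : ℂ)) * star U₁) (f : n → ℝ) :
    ∑ k, ∑ s, r k * f s.1 * Complex.normSq ((star U * (U₁ ⊗ₖ U₂)) k s) = ∑ i, p i * f i := by
  have hf : (U₁ * diagonal (fun i => (f i : ℂ)) * star U₁) ⊗ₖ 1 =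
      (U₁ ⊗ₖ U₂) * diagonal (fun s => (f s.1 : ℂ)) * star (U₁ ⊗ₖ U₂) := by
    rw [← conj_diagonal_one hU₂, conj_diagonal_kronecker_conj_diagonal]
    simp only [Complex.ofReal_one, mul_one]
  rw [← Complex.ofReal_inj, ← trace_conj_diagonal_mul_conj_diagonal, ← hρ, ← hf,
    ← trace_ptrace₂_mul, hρ₁, conj_diagonal_mul_conj_diagonal hU₁, trace_conj_diagonal hU₁]
  push_cast
  rfl

lemma sum_mul_comp_snd_mul_normSq_eq (hρ : ρ = U * diagonal (fun k => (r k : ℂ)) * star U)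
    (hU₁ : U₁ ∈ unitary (Matrix n n ℂ)) (hU₂ : U₂ ∈ unitary (Matrix m m ℂ)) {q : m → ℝ}
    (hρ₂ : ptrace₁ ρ = U₂ * diagonal (fun j => (q j : ℂ)) * star U₂) (g : m → ℝ) :
    ∑ k, ∑ s, r k * g s.2 * Complex.normSq ((star U * (U₁ ⊗ₖ U₂)) k s) = ∑ j, q j * g j := by
  have hg : 1 ⊗ₖ (U₂ * diagonal (fun j => (g j : ℂ)) * star U₂) =
      (U₁ ⊗ₖ U₂) * diagonal (fun s => (g s.2 : ℂ)) * star (U₁ ⊗ₖ U₂) := by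
    rw [← conj_diagonal_one hU₁, conj_diagonal_kronecker_conj_diagonal]
    simp only [Complex.ofReal_one, one_mul]
  rw [← Complex.ofReal_inj, ← trace_conj_diagonal_mul_conj_diagonal, ← hρ, ← hg,
    ← trace_ptrace₁_mul, hρ₂, conj_diagonal_mul_conj_diagonal hU₂, trace_conj_diagonal hU₂]
  push_cast
  rfl

theorem neg_two_mul_log_trace_msqrt_mul_msqrt_le
    (hρ : ρ = U * diagonal (fun k => (r k : ℂ)) * star U)
    (hU : U ∈ unitary (Matrix (n × m) (n × m) ℂ))
    (hU₁ : U₁ ∈ unitary (Matrix n n ℂ)) (hU₂ : U₂ ∈ unitary (Matrix m m ℂ)) {p : n → ℝ} {q : m → ℝ}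
    (hρ₁ : ptrace₂ ρ = U₁ * diagonal (fun i => (p i : ℂ)) * star U₁)
    (hρ₂ : ptrace₁ ρ = U₂ * diagonal (fun j => (q j : ℂ)) * star U₂)
    (hr : ∀ k, 0 ≤ r k) (hr1 : ∑ k, r k = 1) (hp : ∀ i, 0 ≤ p i) (hq : ∀ j, 0 ≤ q j) :
    -2 * Real.log (msqrt ρ * msqrt (ptrace₂ ρ ⊗ₖ ptrace₁ ρ)).trace.re ≤
      ∑ k, r k * Real.log (r k) - ∑ i, p i * Real.log (p i) - ∑ j, q j * Real.log (q j) := by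
  have hV := kronecker_mem_unitary hU₁ hU₂
  have hσ : ptrace₂ ρ ⊗ₖ ptrace₁ ρ =
      (U₁ ⊗ₖ U₂) * diagonal (fun s => ((p s.1 * q s.2 : ℝ) : ℂ)) * star (U₁ ⊗ₖ U₂) := by
    rw [hρ₁, hρ₂, conj_diagonal_kronecker_conj_diagonal]
    push_cast
    rfl
  rw [hσ, msqrt_conj_diagonal hV fun s => mul_nonneg (hp s.1) (hq s.2), hρ,
    msqrt_conj_diagonal hU hr, trace_conj_diagonal_mul_conj_diagonal, Complex.ofReal_re]
  exact neg_two_mul_log_sum_sqrt_le hr hr1 (fun k s => Complex.normSq_nonneg _)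
    (sum_normSq_star_mul_apply hU hV) (sum_mul_comp_fst_mul_normSq_eq hρ hU₁ hU₂ hρ₁)
    (sum_mul_comp_snd_mul_normSq_eq hρ hU₁ hU₂ hρ₂)

end Bipartite

theorem stmt0 {n m : Type*} [Fintype n] [DecidableEq n] [Fintype m] [DecidableEq m]
    (ρ₁₂ : Matrix (n × m) (n × m) ℂ) (hρ : ρ₁₂.PosSemidef) (htr : ρ₁₂.trace = 1) :
    entropy (ptrace₂ ρ₁₂) + entropy (ptrace₁ ρ₁₂) - entropy ρ₁₂ ≥
      -2 * Real.log (1 - (1/2) *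
        (((msqrt ρ₁₂ - msqrt (ptrace₂ ρ₁₂ ⊗ₖ ptrace₁ ρ₁₂)) ^ 2).trace.re)) := by
  have hρ₁ := hρ.ptrace₂
  have hρ₂ := hρ.ptrace₁
  have htr₁ : (ptrace₂ ρ₁₂).trace = 1 := by simpa [htr] using trace_ptrace₂_mul ρ₁₂ 1
  have htr₂ : (ptrace₁ ρ₁₂).trace = 1 := by simpa [htr] using trace_ptrace₁_mul ρ₁₂ 1
  have htrσ : (ptrace₂ ρ₁₂ ⊗ₖ ptrace₁ ρ₁₂).trace = 1 := by
    rw [trace_kronecker, htr₁, htr₂, one_mul]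
  rw [entropy_eq_neg_sum hρ.1, entropy_eq_neg_sum hρ₁.1, entropy_eq_neg_sum hρ₂.1,
    one_sub_half_trace_sq_sub_msqrt hρ (hρ₁.kronecker hρ₂) htr htrσ]
  have := neg_two_mul_log_trace_msqrt_mul_msqrt_le hρ.1.eq_conj_diagonal_eigenvalues
    hρ.1.eigenvectorUnitary.2 hρ₁.1.eigenvectorUnitary.2 hρ₂.1.eigenvectorUnitary.2
    hρ₁.1.eq_conj_diagonal_eigenvalues hρ₂.1.eq_conj_diagonal_eigenvalues hρ.eigenvalues_nonneg
    (hρ.1.sum_eigenvalues_eq_one htr) hρ₁.eigenvalues_nonneg hρ₂.eigenvalues_nonneg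
  linarith
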